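/- Extreme points of the convex set D₀ := {f : ℝ^{n+1} → Δ_m measurable} (functions considered up to γ-a.e. equality) are exactly the functions taking values γ-almost everywhere in the set of vertices {e_1, ..., e_m} of the simplex Δ_m. -/
import Mathlib


open MeasureTheory Real

noncomputable def gaussianDensity (n : ℕ) (x : EuclideanSpace ℝ (Fin n)) : ℝ :=
  (2 * Real.pi) ^ (-(n : ℝ) / 2) * Real.exp (-‖x‖ ^ 2 / 2)

noncomputable def gaussianMeasure (n : ℕ) : Measure (EuclideanSpace ℝ (Fin n)) :=
  volume.withDensity (fun x => ENNReal.ofReal (gaussianDensity n x))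

/-- The Ornstein-Uhlenbeck operator `T_ρ`. -/
noncomputable def ouOp (n : ℕ) (ρ : ℝ) (f : EuclideanSpace ℝ (Fin n) → ℝ)
    (x : EuclideanSpace ℝ (Fin n)) : ℝ :=
  ∫ y, f (ρ • x + Real.sqrt (1 - ρ ^ 2) • y) ∂(gaussianMeasure n)

lemma simplex_eq_single {m : ℕ} (v : Fin m → ℝ) (h0 : ∀ k, 0 ≤ v k)
    (hs : ∑ k, v k = 1) (i : Fin m) (hi : v i = 1) : v = Pi.single i 1 := by
  funext k
  rcases eq_or_ne k i with rfl | hk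
  · simp [hi]
  · have h1 : ∑ k ∈ Finset.univ.erase i, v k = 0 := by
      have h2 := Finset.sum_erase_add Finset.univ v (Finset.mem_univ i)
      rw [hs, hi] at h2
      linarith
    have hz : v k = 0 :=
      (Finset.sum_eq_zero_iff_of_nonneg (fun j _ => h0 j)).mp h1 k
        (Finset.mem_erase.mpr ⟨hk, Finset.mem_univ k⟩)
    simp [Pi.single_apply, hk, hz]

/-- a measurable function into the probability simplex `Δ_m`
(considered up to `γ`-a.e. equality) is an extreme point of the convex set
`D₀ = {f : ℝ^{n+1} → Δ_m}` if and only if it takes values `γ`-a.e. in the set of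
vertices `{e_1, …, e_m}` of the simplex. -/
theorem extreme_points_of_simplex_valued_functions (n m : ℕ)
    (f : EuclideanSpace ℝ (Fin (n + 1)) → (Fin m → ℝ))
    (hf : Measurable f) (hfΔ : ∀ x, (∀ i, 0 ≤ f x i) ∧ ∑ i, f x i = 1) :
    (∀ g h : EuclideanSpace ℝ (Fin (n + 1)) → (Fin m → ℝ),
      Measurable g → Measurable h →
      (∀ x, (∀ i, 0 ≤ g x i) ∧ ∑ i, g x i = 1) →
      (∀ x, (∀ i, 0 ≤ h x i) ∧ ∑ i, h x i = 1) →
      ∀ t : ℝ, t ∈ Set.Ioo (0 : ℝ) 1 →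
      (f =ᵐ[gaussianMeasure (n + 1)] fun x => t • g x + (1 - t) • h x) →
      (g =ᵐ[gaussianMeasure (n + 1)] f ∧ h =ᵐ[gaussianMeasure (n + 1)] f))
    ↔ (∀ᵐ x ∂(gaussianMeasure (n + 1)), ∃ i : Fin m, f x = Pi.single i 1) := by
  set μ := gaussianMeasure (n + 1) with hμdef
  constructor
  · intro hext
    by_contra hN
    rw [MeasureTheory.ae_iff] at hN
    -- find a pair of coordinates that are simultaneously positive on a non-null set
    have hsub : {x | ¬ ∃ i : Fin m, f x = Pi.single i 1} ⊆
        ⋃ (i : Fin m) (j : Fin m) (_ : i ≠ j), {x | 0 < f x i ∧ 0 < f x j} := by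
      intro x hx
      have hpair : ∃ i j : Fin m, i ≠ j ∧ 0 < f x i ∧ 0 < f x j := by
        by_contra hc
        push_neg at hc
        have hex : ∃ i ∈ Finset.univ, f x i ≠ 0 :=
          Finset.exists_ne_zero_of_sum_ne_zero (by rw [(hfΔ x).2]; norm_num)
        obtain ⟨i, -, hi0⟩ := hex
        have hipos : 0 < f x i := lt_of_le_of_ne ((hfΔ x).1 i) (Ne.symm hi0)
        have hz : ∀ j, j ≠ i → f x j = 0 := by
          intro j hj
          exact le_antisymm (hc i j (Ne.symm hj) hipos) ((hfΔ x).1 j)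
        have hi1 : f x i = 1 := by
          rw [← (hfΔ x).2]
          exact (Finset.sum_eq_single i (fun j _ hj => hz j hj)
            (fun h => absurd (Finset.mem_univ i) h)).symm
        exact hx ⟨i, simplex_eq_single _ (hfΔ x).1 (hfΔ x).2 i hi1⟩
      obtain ⟨i, j, hij, h1, h2⟩ := hpair
      simp only [Set.mem_iUnion]
      exact ⟨i, j, hij, h1, h2⟩
    have hApos : ∃ i j : Fin m, i ≠ j ∧ μ {x | 0 < f x i ∧ 0 < f x j} ≠ 0 := by
      by_contra hc
      push_neg at hc
      exact hN (measure_mono_null hsub (measure_iUnion_null fun i =>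
        measure_iUnion_null fun j => measure_iUnion_null fun hij => hc i j hij))
    obtain ⟨i, j, hij, hA⟩ := hApos
    set A := {x | 0 < f x i ∧ 0 < f x j} with hAdef
    have hAm : MeasurableSet A := by
      have h1 : MeasurableSet {x | 0 < f x i} :=
        measurableSet_lt measurable_const ((measurable_pi_apply i).comp hf)
      have h2 : MeasurableSet {x | 0 < f x j} :=
        measurableSet_lt measurable_const ((measurable_pi_apply j).comp hf)
      exact h1.inter h2
    set c : Fin m → ℝ := Pi.single i 1 - Pi.single j 1 with hcdef
    set δ : EuclideanSpace ℝ (Fin (n + 1)) → ℝ :=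
      fun x => if x ∈ A then min (f x i) (f x j) else 0 with hδdef
    have hδm : Measurable δ :=
      Measurable.ite hAm
        (((measurable_pi_apply i).comp hf).min ((measurable_pi_apply j).comp hf))
        measurable_const
    have hδ0 : ∀ x, 0 ≤ δ x := by
      intro x
      by_cases hx : x ∈ A
      · simp only [hδdef, if_pos hx]
        exact le_min hx.1.le hx.2.le
      · simp [hδdef, if_neg hx]
    have hδi : ∀ x, δ x ≤ f x i := by
      intro x
      by_cases hx : x ∈ A
      · simp only [hδdef, if_pos hx]; exact min_le_left _ _
      · simp only [hδdef, if_neg hx]; exact (hfΔ x).1 i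
    have hδj : ∀ x, δ x ≤ f x j := by
      intro x
      by_cases hx : x ∈ A
      · simp only [hδdef, if_pos hx]; exact min_le_right _ _
      · simp only [hδdef, if_neg hx]; exact (hfΔ x).1 j
    set g : EuclideanSpace ℝ (Fin (n + 1)) → (Fin m → ℝ) :=
      fun x => f x + δ x • c with hgdef
    set h : EuclideanSpace ℝ (Fin (n + 1)) → (Fin m → ℝ) :=
      fun x => f x - δ x • c with hhdef
    have hck : ∀ k, c k = (if k = i then (1:ℝ) else 0) - (if k = j then 1 else 0) := by
      intro k
      simp [hcdef, Pi.single_apply]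
    have hci : c i = 1 := by simp [hck, hij]
    have hcj : c j = -1 := by simp [hck, Ne.symm hij]
    have hcs : ∑ k, c k = 0 := by
      simp [Finset.sum_sub_distrib, hck]
    have hgk : ∀ x k, g x k = f x k + δ x * c k := fun x k => rfl
    have hhk : ∀ x k, h x k = f x k - δ x * c k := fun x k => rfl
    have hgΔ : ∀ x, (∀ k, 0 ≤ g x k) ∧ ∑ k, g x k = 1 := by
      intro x
      constructor
      · intro k
        rcases eq_or_ne k i with rfl | hki
        · rw [hgk, hci]
          have := (hfΔ x).1 k
          have := hδ0 x
          linarith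
        rcases eq_or_ne k j with rfl | hkj
        · rw [hgk, hcj]
          have := hδj x
          linarith
        · have hc0 : c k = 0 := by simp [hck, hki, hkj]
          rw [hgk, hc0]
          simpa using (hfΔ x).1 k
      · have hsum : ∑ k, g x k = (∑ k, f x k) + δ x * ∑ k, c k := by
          simp only [hgk, Finset.sum_add_distrib, Finset.mul_sum]
        rw [hsum, hcs, (hfΔ x).2]; ring
    have hhΔ : ∀ x, (∀ k, 0 ≤ h x k) ∧ ∑ k, h x k = 1 := by
      intro x
      constructor
      · intro k
        rcases eq_or_ne k i with rfl | hki
        · rw [hhk, hci]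
          have := hδi x
          linarith
        rcases eq_or_ne k j with rfl | hkj
        · rw [hhk, hcj]
          have := (hfΔ x).1 k
          have := hδ0 x
          linarith
        · have hc0 : c k = 0 := by simp [hck, hki, hkj]
          rw [hhk, hc0]
          simpa using (hfΔ x).1 k
      · have hsum : ∑ k, h x k = (∑ k, f x k) - δ x * ∑ k, c k := by
          simp only [hhk, Finset.sum_sub_distrib, Finset.mul_sum]
        rw [hsum, hcs, (hfΔ x).2]; ring
    have hgm : Measurable g := by
      refine measurable_pi_lambda _ (fun k => ?_)
      exact ((measurable_pi_apply k).comp hf).add (hδm.mul_const (c k))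
    have hhm : Measurable h := by
      refine measurable_pi_lambda _ (fun k => ?_)
      exact ((measurable_pi_apply k).comp hf).sub (hδm.mul_const (c k))
    have hcomb : f =ᵐ[μ] fun x => (1/2 : ℝ) • g x + (1 - 1/2 : ℝ) • h x := by
      refine Filter.EventuallyEq.of_eq (funext fun x => funext fun k => ?_)
      show f x k = (1/2 : ℝ) * g x k + (1 - 1/2 : ℝ) * h x k
      rw [hgk, hhk]; ring
    obtain ⟨hgf, -⟩ := hext g h hgm hhm hgΔ hhΔ (1/2) ⟨by norm_num, by norm_num⟩ hcomb
    apply hA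
    refine measure_mono_null ?_ (MeasureTheory.ae_iff.mp hgf)
    intro x hx
    simp only [Set.mem_setOf_eq]
    intro heq
    have hxi := congrFun heq i
    rw [hgk, hci] at hxi
    have hδpos : 0 < δ x := by
      simp only [hδdef, if_pos hx]
      exact lt_min hx.1 hx.2
    simp only [mul_one] at hxi
    linarith
  · intro hv g h hgm hhm hgΔ hhΔ t ht hcomb
    obtain ⟨ht0, ht1⟩ := ht
    have key : ∀ᵐ x ∂μ, g x = f x ∧ h x = f x := by
      filter_upwards [hv, hcomb] with x hx hfx
      obtain ⟨i, hi⟩ := hx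
      have hfi : f x i = 1 := by rw [hi]; simp
      have hgi1 : g x i ≤ 1 := by
        rw [← (hgΔ x).2]
        exact Finset.single_le_sum (fun k _ => (hgΔ x).1 k) (Finset.mem_univ i)
      have hhi1 : h x i ≤ 1 := by
        rw [← (hhΔ x).2]
        exact Finset.single_le_sum (fun k _ => (hhΔ x).1 k) (Finset.mem_univ i)
      have heqi : f x i = t * g x i + (1 - t) * h x i := by
        have := congrFun hfx i
        simpa using this
      have e1 : t * (1 - g x i) + (1 - t) * (1 - h x i) = 0 := by
        rw [hfi] at heqi; nlinarith [heqi]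
      have p1 : 0 ≤ t * (1 - g x i) := mul_nonneg ht0.le (by linarith)
      have p2 : 0 ≤ (1 - t) * (1 - h x i) := mul_nonneg (by linarith) (by linarith)
      have hg1 : g x i = 1 := by
        have hz : t * (1 - g x i) = 0 := le_antisymm (by linarith) p1
        have := (mul_eq_zero.mp hz).resolve_left (ne_of_gt ht0)
        linarith
      have hh1 : h x i = 1 := by
        have hz : (1 - t) * (1 - h x i) = 0 := le_antisymm (by linarith) p2
        have := (mul_eq_zero.mp hz).resolve_left (by intro hc; linarith)
        linarith
      exact ⟨(simplex_eq_single _ (hgΔ x).1 (hgΔ x).2 i hg1).trans hi.symm,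
             (simplex_eq_single _ (hhΔ x).1 (hhΔ x).2 i hh1).trans hi.symm⟩
    exact ⟨key.mono fun x hx => hx.1, key.mono fun x hx => hx.2⟩
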